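/- For all positive integers s and t, A(s,t) ≤ t·K(s,t) < t·K'(s,t) < A(s+1, t+2). -/
import Mathlib


/-- The Ackermann function of the paper, defined for positive integers `s, t`:
`A(1,t) = 2t`, `A(s,1) = 2`, and `A(s,t) = A(s-1, A(s,t-1))` for `s, t > 1`.
(The value at arguments equal to `0` is junk.) -/
def A : ℕ → ℕ → ℕ
  | 0, _ => 0
  | 1, t => 2 * t
  | _+2, 0 => 0
  | _+2, 1 => 2
  | s+2, t+2 => A (s+1) (A (s+2) (t+1))
termination_by s t => (s, t)

/-- The pair `(K(s,t), K'(s,t))` of auxiliary functions, defined for positive integers `s, t`: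
`K(1,t) = 2`, `K'(1,t) = 5`; `K(s,1) = 2^s`, `K'(s,1) = 2^s + 3`; and for `s, t > 1`,
`K(s,t) = K(s,t-1) * K(s-1, K'(s,t-1))` and
`K'(s,t) = K'(s,t-1) * K(s-1, K'(s,t-1)) + K'(s-1, K'(s,t-1))`.
(The value at arguments equal to `0` is junk.) -/
def KK : ℕ → ℕ → ℕ × ℕ
  | 0, _ => (0, 0)
  | 1, _ => (2, 5)
  | _+2, 0 => (0, 0)
  | s+2, 1 => (2^(s+2), 2^(s+2) + 3)
  | s+2, t+2 =>
    let p := KK (s+2) (t+1)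
    let q := KK (s+1) p.2
    (p.1 * q.1, p.2 * q.1 + q.2)
termination_by s t => (s, t)

/-- The function `K(s,t)`. -/
def K (s t : ℕ) : ℕ := (KK s t).1

/-- The function `K'(s,t)`. -/
def K' (s t : ℕ) : ℕ := (KK s t).2

lemma add11 (n : ℕ) : n + 1 + 1 = n + 2 := rfl

lemma A_one (t : ℕ) : A 1 t = 2 * t := by simp [A]
lemma A_s1 (s : ℕ) : A (s+2) 1 = 2 := by simp [A]
lemma A_rec (s t : ℕ) : A (s+2) (t+2) = A (s+1) (A (s+2) (t+1)) := by rw [A]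
lemma K_one (t : ℕ) : K 1 t = 2 := by simp [K, KK]
lemma K'_one (t : ℕ) : K' 1 t = 5 := by simp [K', KK]
lemma K_s1 (s : ℕ) : K (s+2) 1 = 2^(s+2) := by simp [K, KK]
lemma K'_s1 (s : ℕ) : K' (s+2) 1 = 2^(s+2) + 3 := by simp [K', KK]
lemma K_rec (s t : ℕ) : K (s+2) (t+2) = K (s+2) (t+1) * K (s+1) (K' (s+2) (t+1)) := by
  simp only [K, K']; rw [KK]
lemma K'_rec (s t : ℕ) :
    K' (s+2) (t+2) = K' (s+2) (t+1) * K (s+1) (K' (s+2) (t+1)) + K' (s+1) (K' (s+2) (t+1)) := by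
  simp only [K, K']; rw [KK]

-- generic-level recurrences
lemma A_rec2 (r s t : ℕ) (hr : r + 1 = s) (h1 : 1 ≤ r) (ht : 1 ≤ t) :
    A s (t+1) = A r (A s t) := by
  obtain ⟨r', rfl⟩ : ∃ r', r = r' + 1 := ⟨r - 1, by omega⟩
  obtain ⟨u, rfl⟩ : ∃ u, t = u + 1 := ⟨t - 1, by omega⟩
  subst hr
  exact A_rec r' u
lemma K_rec2 (r s t : ℕ) (hr : r + 1 = s) (h1 : 1 ≤ r) (ht : 1 ≤ t) :
    K s (t+1) = K s t * K r (K' s t) := by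
  obtain ⟨r', rfl⟩ : ∃ r', r = r' + 1 := ⟨r - 1, by omega⟩
  obtain ⟨u, rfl⟩ : ∃ u, t = u + 1 := ⟨t - 1, by omega⟩
  subst hr
  exact K_rec r' u
lemma K'_rec2 (r s t : ℕ) (hr : r + 1 = s) (h1 : 1 ≤ r) (ht : 1 ≤ t) :
    K' s (t+1) = K' s t * K r (K' s t) + K' r (K' s t) := by
  obtain ⟨r', rfl⟩ : ∃ r', r = r' + 1 := ⟨r - 1, by omega⟩
  obtain ⟨u, rfl⟩ : ∃ u, t = u + 1 := ⟨t - 1, by omega⟩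
  subst hr
  exact K'_rec r' u
lemma A_s1G (s : ℕ) (hs : 2 ≤ s) : A s 1 = 2 := by
  obtain ⟨s', rfl⟩ : ∃ s', s = s' + 2 := ⟨s - 2, by omega⟩
  exact A_s1 s'
lemma K_s1G (s : ℕ) (hs : 2 ≤ s) : K s 1 = 2^s := by
  obtain ⟨s', rfl⟩ : ∃ s', s = s' + 2 := ⟨s - 2, by omega⟩
  exact K_s1 s'
lemma K'_s1G (s : ℕ) (hs : 2 ≤ s) : K' s 1 = 2^s + 3 := by
  obtain ⟨s', rfl⟩ : ∃ s', s = s' + 2 := ⟨s - 2, by omega⟩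
  exact K'_s1 s'

lemma A_ge_core (s : ℕ) : ∀ t, 1 ≤ t → 2 * t ≤ A (s+1) t := by
  induction s with
  | zero => intro t ht; rw [A_one]
  | succ s ih =>
    intro t ht
    simp only [add11]
    obtain ⟨u, rfl⟩ : ∃ u, t = u + 1 := ⟨t - 1, by omega⟩
    induction u with
    | zero => show 2 * 1 ≤ A (s+2) 1; rw [A_s1]
    | succ u ihu =>
      have h1 : 2 * (u + 1) ≤ A (s+2) (u+1) := ihu (by omega)
      show 2 * (u+2) ≤ A (s+2) (u+2)
      rw [A_rec]
      have h2 : 2 * (A (s+2) (u+1)) ≤ A (s+1) (A (s+2) (u+1)) := ih _ (by omega)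
      omega

lemma A_ge (s t : ℕ) (hs : 1 ≤ s) (ht : 1 ≤ t) : 2 * t ≤ A s t := by
  obtain ⟨s', rfl⟩ : ∃ s', s = s' + 1 := ⟨s - 1, by omega⟩
  exact A_ge_core s' t ht

lemma A_mono_succ (s t : ℕ) (hs : 1 ≤ s) (ht : 1 ≤ t) : A s t ≤ A s (t+1) := by
  obtain ⟨s', rfl⟩ : ∃ s', s = s' + 1 := ⟨s - 1, by omega⟩
  cases s' with
  | zero => rw [show (0:ℕ)+1 = 1 from rfl, A_one, A_one]; omega
  | succ s =>
    obtain ⟨u, rfl⟩ : ∃ u, t = u + 1 := ⟨t - 1, by omega⟩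
    show A (s+2) (u+1) ≤ A (s+2) (u+2)
    rw [A_rec]
    have h1 : 2 * (u + 1) ≤ A (s+2) (u+1) := A_ge (s+2) _ (by omega) (by omega)
    have h2 : 2 * (A (s+2) (u+1)) ≤ A (s+1) (A (s+2) (u+1)) :=
      A_ge (s+1) _ (by omega) (by omega)
    omega

lemma A_mono (s : ℕ) {a b : ℕ} (hs : 1 ≤ s) (ha : 1 ≤ a) (hab : a ≤ b) : A s a ≤ A s b := by
  induction b, hab using Nat.le_induction with
  | base => exact le_refl _
  | succ b hb ihb => exact le_trans ihb (A_mono_succ s b hs (le_trans ha hb))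

lemma A_two (s : ℕ) (hs : 1 ≤ s) : A s 2 = 4 := by
  obtain ⟨s', rfl⟩ : ∃ s', s = s' + 1 := ⟨s - 1, by omega⟩
  induction s' with
  | zero => rw [show (0:ℕ)+1 = 1 from rfl, A_one]
  | succ s ih =>
    show A (s+2) 2 = 4
    rw [show (2:ℕ) = 0 + 2 from rfl, A_rec, A_s1]
    exact ih (by omega)

lemma A_three (r s : ℕ) (hr : r + 1 = s) (h1 : 1 ≤ r) : A s 3 = A r 4 := by
  have h : A s 3 = A r (A s 2) := A_rec2 r s 2 hr h1 (by omega)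
  rw [h, A_two s (by omega)]

lemma A_four (s : ℕ) (hs : 1 ≤ s) : 2^(s+1) ≤ A s 4 := by
  obtain ⟨s', rfl⟩ : ∃ s', s = s' + 1 := ⟨s - 1, by omega⟩
  induction s' with
  | zero => rw [show (0:ℕ)+1 = 1 from rfl, A_one]; norm_num
  | succ s ih =>
    show 2^(s+3) ≤ A (s+2) 4
    have h0 : A (s+2) 4 = A (s+1) (A (s+2) 3) := A_rec2 (s+1) (s+2) 3 rfl (by omega) (by omega)
    have h1 : A (s+2) 3 = A (s+1) 4 := A_three (s+1) (s+2) rfl (by omega)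
    have hp : 1 ≤ A (s+1) 4 := by
      have := A_ge (s+1) 4 (by omega) (by omega); omega
    have h2 : 2 * (A (s+1) 4) ≤ A (s+1) (A (s+1) 4) := A_ge (s+1) _ (by omega) hp
    have h3 : 2^(s+2) ≤ A (s+1) 4 := ih (by omega)
    have h4 : 2^(s+3) = 2 * 2^(s+2) := by ring
    rw [h0, h1]
    omega

lemma A_two_pow : ∀ t, 1 ≤ t → A 2 t = 2^t := by
  intro t ht
  obtain ⟨u, rfl⟩ : ∃ u, t = u + 1 := ⟨t - 1, by omega⟩
  induction u with
  | zero => show A 2 1 = 2^1; rw [A_s1G 2 (by omega)]; norm_num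
  | succ u ihu =>
    show A 2 (u+2) = 2^(u+2)
    have h := A_rec2 1 2 (u+1) rfl (by omega) (by omega)
    rw [show u+1+1 = u+2 from rfl] at h
    rw [h, A_one, ihu (by omega)]
    ring

lemma KK_pos_core (s : ℕ) : ∀ t, 1 ≤ t → 2 ≤ K (s+1) t ∧ 5 ≤ K' (s+1) t := by
  induction s with
  | zero => intro t ht; rw [show (0:ℕ)+1 = 1 from rfl, K_one, K'_one]; omega
  | succ s ih =>
    intro t ht
    simp only [add11]
    obtain ⟨u, rfl⟩ : ∃ u, t = u + 1 := ⟨t - 1, by omega⟩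
    induction u with
    | zero =>
      show 2 ≤ K (s+2) 1 ∧ 5 ≤ K' (s+2) 1
      rw [K_s1, K'_s1]
      have : 4 ≤ 2^(s+2) := by
        calc (4:ℕ) = 2^2 := rfl
        _ ≤ 2^(s+2) := Nat.pow_le_pow_right (by norm_num) (by omega)
      omega
    | succ u ihu =>
      obtain ⟨hk, hk'⟩ := ihu (by omega)
      obtain ⟨hq1, hq2⟩ := ih (K' (s+2) (u+1)) (by omega)
      show 2 ≤ K (s+2) (u+2) ∧ 5 ≤ K' (s+2) (u+2)
      rw [K_rec, K'_rec]
      exact ⟨by nlinarith, by nlinarith⟩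

lemma K_pos (s t : ℕ) (hs : 1 ≤ s) (ht : 1 ≤ t) : 2 ≤ K s t := by
  obtain ⟨s', rfl⟩ : ∃ s', s = s' + 1 := ⟨s - 1, by omega⟩
  exact (KK_pos_core s' t ht).1

lemma K'_pos (s t : ℕ) (hs : 1 ≤ s) (ht : 1 ≤ t) : 5 ≤ K' s t := by
  obtain ⟨s', rfl⟩ : ∃ s', s = s' + 1 := ⟨s - 1, by omega⟩
  exact (KK_pos_core s' t ht).2

lemma K_pow (s t : ℕ) (hs : 1 ≤ s) (ht : 1 ≤ t) : 2^s ≤ K s t := by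
  obtain ⟨s', rfl⟩ : ∃ s', s = s' + 1 := ⟨s - 1, by omega⟩
  cases s' with
  | zero => rw [show (0:ℕ)+1 = 1 from rfl, K_one]; norm_num
  | succ s =>
    obtain ⟨u, rfl⟩ : ∃ u, t = u + 1 := ⟨t - 1, by omega⟩
    induction u with
    | zero => show 2^(s+2) ≤ K (s+2) 1; rw [K_s1]
    | succ u ihu =>
      have h1 : 2^(s+2) ≤ K (s+2) (u+1) := ihu (by omega)
      have hk' : 5 ≤ K' (s+2) (u+1) := K'_pos (s+2) (u+1) (by omega) (by omega)
      have h3 : 2 ≤ K (s+1) (K' (s+2) (u+1)) := K_pos (s+1) _ (by omega) (by omega)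
      show 2^(s+2) ≤ K (s+2) (u+2)
      rw [K_rec]
      nlinarith

lemma K_add3_core (s : ℕ) : ∀ t, 1 ≤ t → K (s+1) t + 3 ≤ K' (s+1) t := by
  induction s with
  | zero => intro t ht; rw [show (0:ℕ)+1 = 1 from rfl, K_one, K'_one]
  | succ s ih =>
    intro t ht
    simp only [add11]
    obtain ⟨u, rfl⟩ : ∃ u, t = u + 1 := ⟨t - 1, by omega⟩
    induction u with
    | zero => show K (s+2) 1 + 3 ≤ K' (s+2) 1; rw [K_s1, K'_s1]
    | succ u ihu =>
      have h1 : K (s+2) (u+1) + 3 ≤ K' (s+2) (u+1) := ihu (by omega)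
      have hk' : 5 ≤ K' (s+2) (u+1) := K'_pos (s+2) (u+1) (by omega) (by omega)
      have h3 : 2 ≤ K (s+1) (K' (s+2) (u+1)) := K_pos (s+1) _ (by omega) (by omega)
      have h4 : K (s+1) (K' (s+2) (u+1)) + 3 ≤ K' (s+1) (K' (s+2) (u+1)) :=
        ih (K' (s+2) (u+1)) (by omega)
      show K (s+2) (u+2) + 3 ≤ K' (s+2) (u+2)
      rw [K_rec, K'_rec]
      nlinarith

lemma K_add3 (s t : ℕ) (hs : 1 ≤ s) (ht : 1 ≤ t) : K s t + 3 ≤ K' s t := by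
  obtain ⟨s', rfl⟩ : ∃ s', s = s' + 1 := ⟨s - 1, by omega⟩
  exact K_add3_core s' t ht

lemma K5K_core (s : ℕ) : ∀ t, 1 ≤ t → K' (s+1) t + 5 ≤ 5 * K (s+1) t := by
  induction s with
  | zero => intro t ht; rw [show (0:ℕ)+1 = 1 from rfl, K_one, K'_one]
  | succ s ih =>
    intro t ht
    simp only [add11]
    obtain ⟨u, rfl⟩ : ∃ u, t = u + 1 := ⟨t - 1, by omega⟩
    induction u with
    | zero =>
      show K' (s+2) 1 + 5 ≤ 5 * K (s+2) 1
      rw [K_s1, K'_s1]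
      have : 4 ≤ 2^(s+2) := by
        calc (4:ℕ) = 2^2 := rfl
        _ ≤ 2^(s+2) := Nat.pow_le_pow_right (by norm_num) (by omega)
      omega
    | succ u ihu =>
      have h1 : K' (s+2) (u+1) + 5 ≤ 5 * K (s+2) (u+1) := ihu (by omega)
      have hk' : 5 ≤ K' (s+2) (u+1) := K'_pos (s+2) (u+1) (by omega) (by omega)
      have h3 : 2 ≤ K (s+1) (K' (s+2) (u+1)) := K_pos (s+1) _ (by omega) (by omega)
      have h4 : K' (s+1) (K' (s+2) (u+1)) + 5 ≤ 5 * K (s+1) (K' (s+2) (u+1)) :=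
        ih (K' (s+2) (u+1)) (by omega)
      show K' (s+2) (u+2) + 5 ≤ 5 * K (s+2) (u+2)
      rw [K_rec, K'_rec]
      nlinarith

lemma K5K (s t : ℕ) (hs : 1 ≤ s) (ht : 1 ≤ t) : K' s t + 5 ≤ 5 * K s t := by
  obtain ⟨s', rfl⟩ : ∃ s', s = s' + 1 := ⟨s - 1, by omega⟩
  exact K5K_core s' t ht

lemma K'_ge_pow (s t : ℕ) (hs : 1 ≤ s) (ht : 1 ≤ t) : 2^s + 3 ≤ K' s t := by
  have h1 := K_pow s t hs ht
  have h2 := K_add3 s t hs ht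
  omega

lemma K'_double (s t : ℕ) (hs : 2 ≤ s) (ht : 1 ≤ t) : 2 * K' s t ≤ K' s (t+1) := by
  obtain ⟨s', rfl⟩ : ∃ s', s = s' + 2 := ⟨s - 2, by omega⟩
  have h2 : 5 ≤ K' (s'+2) t := K'_pos (s'+2) t (by omega) ht
  have h3 : 2 ≤ K (s'+1) (K' (s'+2) t) := K_pos (s'+1) _ (by omega) (by omega)
  rw [K'_rec2 (s'+1) (s'+2) t rfl (by omega) ht]
  nlinarith

lemma K'_mono (s : ℕ) {a b : ℕ} (hs : 2 ≤ s) (ha : 1 ≤ a) (hab : a ≤ b) :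
    K' s a ≤ K' s b := by
  induction b, hab using Nat.le_induction with
  | base => exact le_refl _
  | succ b hb ihb =>
    have := K'_double s b hs (le_trans ha hb)
    omega

lemma K'_le_D (s : ℕ) (hs : 2 ≤ s) : ∀ t, 1 ≤ t → K' s t ≤ (t+1) * K s t := by
  obtain ⟨s', rfl⟩ : ∃ s', s = s' + 2 := ⟨s - 2, by omega⟩
  intro t ht
  obtain ⟨u, rfl⟩ : ∃ u, t = u + 1 := ⟨t - 1, by omega⟩
  induction u with
  | zero =>
    show K' (s'+2) 1 ≤ 2 * K (s'+2) 1
    rw [K_s1, K'_s1]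
    have : 4 ≤ 2^(s'+2) := by
      calc (4:ℕ) = 2^2 := rfl
      _ ≤ 2^(s'+2) := Nat.pow_le_pow_right (by norm_num) (by omega)
    omega
  | succ u ihu =>
    have h1 : K' (s'+2) (u+1) ≤ (u+2) * K (s'+2) (u+1) := ihu (by omega)
    have hk' : 5 ≤ K' (s'+2) (u+1) := K'_pos (s'+2) (u+1) (by omega) (by omega)
    have hq1 : 2 ≤ K (s'+1) (K' (s'+2) (u+1)) := K_pos (s'+1) _ (by omega) (by omega)
    have hq2q1 : K' (s'+1) (K' (s'+2) (u+1)) ≤ K (s'+2) (u+1) * K (s'+1) (K' (s'+2) (u+1)) := by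
      cases s' with
      | zero =>
        rw [show (0:ℕ)+1 = 1 from rfl, K'_one]
        have h4 : 4 ≤ K (0+2) (u+1) := by
          have := K_pow (0+2) (u+1) (by omega) (by omega)
          norm_num at this ⊢
          omega
        have h2 : 2 ≤ K (0+1) (K' (0+2) (u+1)) := hq1
        nlinarith
      | succ v =>
        have hE : K' (v+1+1) (K' (v+1+2) (u+1)) + 5 ≤ 5 * K (v+1+1) (K' (v+1+2) (u+1)) :=
          K5K (v+1+1) _ (by omega) (by
            have : 5 ≤ K' (v+1+2) (u+1) := K'_pos (v+1+2) (u+1) (by omega) (by omega)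
            omega)
        have h8 : 8 ≤ K (v+1+2) (u+1) := by
          have h := K_pow (v+1+2) (u+1) (by omega) (by omega)
          have : (8:ℕ) ≤ 2^(v+1+2) := by
            calc (8:ℕ) = 2^3 := rfl
            _ ≤ 2^(v+1+2) := Nat.pow_le_pow_right (by norm_num) (by omega)
          omega
        have hq1' : 2 ≤ K (v+1+1) (K' (v+1+2) (u+1)) := hq1
        nlinarith [mul_le_mul_left h8 (K (v+1+1) (K' (v+1+2) (u+1)))]
    show K' (s'+2) (u+2) ≤ (u+3) * K (s'+2) (u+2)
    rw [K_rec, K'_rec]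
    nlinarith

lemma main1_core (s : ℕ) : ∀ t, 1 ≤ t →
    A (s+1) t ≤ t * K (s+1) t ∧ (1 ≤ s → A (s+1) t ≤ K' (s+1) t) := by
  induction s with
  | zero =>
    intro t ht
    rw [show (0:ℕ)+1 = 1 from rfl, A_one, K_one]
    exact ⟨by omega, by omega⟩
  | succ s ih =>
    intro t ht
    simp only [add11]
    obtain ⟨u, rfl⟩ : ∃ u, t = u + 1 := ⟨t - 1, by omega⟩
    induction u with
    | zero =>
      show A (s+2) 1 ≤ 1 * K (s+2) 1 ∧ (1 ≤ s + 1 → A (s+2) 1 ≤ K' (s+2) 1)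
      rw [A_s1, K_s1, K'_s1]
      have : 4 ≤ 2^(s+2) := by
        calc (4:ℕ) = 2^2 := rfl
        _ ≤ 2^(s+2) := Nat.pow_le_pow_right (by norm_num) (by omega)
      exact ⟨by omega, fun _ => by omega⟩
    | succ u ihu =>
      have hk' : 5 ≤ K' (s+2) (u+1) := K'_pos (s+2) (u+1) (by omega) (by omega)
      have hq1 : 2 ≤ K (s+1) (K' (s+2) (u+1)) := K_pos (s+1) _ (by omega) (by omega)
      have hA1 : 1 ≤ A (s+2) (u+1) := by
        have := A_ge (s+2) (u+1) (by omega) (by omega); omega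
      have hPa : A (s+2) (u+1) ≤ K' (s+2) (u+1) := (ihu (by omega)).2 (by omega)
      have hm : A (s+1) (A (s+2) (u+1)) ≤ A (s+1) (K' (s+2) (u+1)) :=
        A_mono (s+1) (by omega) hA1 hPa
      have h8 : A (s+1) (K' (s+2) (u+1)) ≤ K' (s+2) (u+1) * K (s+1) (K' (s+2) (u+1)) :=
        (ih (K' (s+2) (u+1)) (by omega)).1
      have hD : K' (s+2) (u+1) ≤ (u+2) * K (s+2) (u+1) := K'_le_D (s+2) (by omega) (u+1) (by omega)
      show A (s+2) (u+2) ≤ (u+2) * K (s+2) (u+2) ∧ (1 ≤ s + 1 → A (s+2) (u+2) ≤ K' (s+2) (u+2))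
      rw [A_rec, K_rec, K'_rec]
      constructor
      · calc A (s+1) (A (s+2) (u+1)) ≤ K' (s+2) (u+1) * K (s+1) (K' (s+2) (u+1)) :=
              le_trans hm h8
        _ ≤ ((u+2) * K (s+2) (u+1)) * K (s+1) (K' (s+2) (u+1)) :=
              Nat.mul_le_mul_right _ hD
        _ = (u+2) * (K (s+2) (u+1) * K (s+1) (K' (s+2) (u+1))) := by ring
      · intro _
        exact le_trans (le_trans hm h8) (Nat.le_add_right _ _)

lemma main1 (s t : ℕ) (hs : 1 ≤ s) (ht : 1 ≤ t) : A s t ≤ t * K s t := by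
  obtain ⟨s', rfl⟩ : ∃ s', s = s' + 1 := ⟨s - 1, by omega⟩
  exact (main1_core s' t ht).1

lemma sq_le_two_pow : ∀ n, 4 ≤ n → n^2 ≤ 2^n := by
  intro n hn
  induction n, hn using Nat.le_induction with
  | base => norm_num
  | succ n hn ih =>
    have h1 : 2*n + 1 ≤ n^2 := by nlinarith
    calc (n+1)^2 = n^2 + (2*n+1) := by ring
    _ ≤ 2^n + 2^n := by omega
    _ = 2^(n+1) := by ring

set_option maxHeartbeats 1000000 in
lemma main2_core : ∀ s, ∀ t, 1 ≤ t → t * K' (s+1) t < A (s+2) (t+2) := by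
  intro s
  induction s using Nat.strong_induction_on with
  | _ s ih =>
    rcases s with _ | _ | s
    · -- s = 0
      intro t ht
      show t * K' 1 t < A 2 (t+2)
      rw [K'_one, A_two_pow (t+2) (by omega)]
      rcases Nat.lt_or_ge t 2 with h | h
      · interval_cases t; norm_num
      · have h1 : (t+2)^2 ≤ 2^(t+2) := sq_le_two_pow (t+2) (by omega)
        nlinarith
    · -- s = 1
      intro t ht
      show t * K' 2 t < A 3 (t+2)
      obtain ⟨u, rfl⟩ : ∃ u, t = u + 1 := ⟨t - 1, by omega⟩
      induction u with
      | zero =>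
        show 1 * K' 2 1 < A 3 3
        rw [K'_s1G 2 (by omega), A_three 2 3 rfl (by omega), A_two_pow 4 (by omega)]
        norm_num
      | succ u ihu =>
        show (u+2) * K' 2 (u+2) < A 3 (u+4)
        have ihu' : (u+1) * K' 2 (u+1) < A 3 (u+3) := ihu (by omega)
        have hk7 : 7 ≤ K' 2 (u+1) := by
          have := K'_ge_pow 2 (u+1) (by omega) (by omega)
          norm_num at this; omega
        set k' := K' 2 (u+1) with hk'def
        have hrec : K' 2 (u+2) = 2 * k' + 5 := by
          have h := K'_rec2 1 2 (u+1) rfl (by omega) (by omega)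
          rw [show u+1+1 = u+2 from rfl, K_one, K'_one] at h
          rw [h]; ring
        have hA3 : 1 ≤ A 3 (u+3) := by
          have := A_ge 3 (u+3) (by omega) (by omega); omega
        have hstep : A 3 (u+4) = 2 ^ (A 3 (u+3)) := by
          have h := A_rec2 2 3 (u+3) rfl (by omega) (by omega)
          rw [show u+3+1 = u+4 from rfl] at h
          rw [h, A_two_pow _ hA3]
        set n := (u+1) * k' with hn
        have hn7 : 7 ≤ n := le_trans hk7 (by rw [hn]; exact Nat.le_mul_of_pos_left _ (by omega))
        have h1 : (u+2) * K' 2 (u+2) ≤ 6 * n := by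
          rw [hrec]
          calc (u+2) * (2*k'+5) ≤ (2*(u+1)) * (3*k') := by
                nlinarith [mul_le_mul_left hk7 u]
          _ = 6 * n := by rw [hn]; ring
        have h2 : 6 * n < n^2 := by nlinarith [mul_le_mul_left hn7 n]
        have h3 : n^2 ≤ 2^n := sq_le_two_pow n (by omega)
        have h4 : (2:ℕ)^n < 2^(n+1) := by
          have : (0:ℕ) < 2^n := by positivity
          omega
        have h5 : (2:ℕ)^(n+1) ≤ 2^(A 3 (u+3)) :=
          Nat.pow_le_pow_right (by norm_num) (by omega)
        rw [hstep]
        omega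
    · -- level s+3 (statement index s+2)
      intro t ht
      show t * K' (s+3) t < A (s+4) (t+2)
      have ihprev : ∀ t, 1 ≤ t → t * K' (s+2) t < A (s+3) (t+2) := by
        intro t' ht'
        exact ih (s+1) (by omega) t' ht'
      have h16 : (8:ℕ) ≤ 2^(s+3) := by
        calc (8:ℕ) = 2^3 := rfl
        _ ≤ 2^(s+3) := Nat.pow_le_pow_right (by norm_num) (by omega)
      have hA43 : A (s+4) 3 = A (s+3) 4 := A_three (s+3) (s+4) rfl (by omega)
      have hA4 : 2^(s+4) ≤ A (s+3) 4 := A_four (s+3) (by omega)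
      have hpow : 2^(s+4) = 2 * 2^(s+3) := by ring
      obtain ⟨u, rfl⟩ : ∃ u, t = u + 1 := ⟨t - 1, by omega⟩
      induction u with
      | zero =>
        show 1 * K' (s+3) 1 < A (s+4) 3
        rw [K'_s1G (s+3) (by omega), hA43]
        omega
      | succ u ihu =>
        rcases u with _ | v
        · -- t = 2
          show 2 * K' (s+3) 2 < A (s+4) 4
          have hk'eq : K' (s+3) 1 = 2^(s+3) + 3 := K'_s1G (s+3) (by omega)
          set k' := K' (s+3) 1 with hk'def
          set q1 := K (s+2) k' with hq1def
          set q2 := K' (s+2) k' with hq2def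
          have hk'pos : 1 ≤ k' := by omega
          have hq1ge : 2 ≤ q1 := K_pos (s+2) k' (by omega) hk'pos
          have hq12 : q1 + 3 ≤ q2 := K_add3 (s+2) k' (by omega) hk'pos
          have hrec : K' (s+3) 2 = k' * q1 + q2 :=
            K'_rec2 (s+2) (s+3) 1 rfl (by omega) (by omega)
          have hdouble : 2 * q2 ≤ K' (s+2) (k'+1) := K'_double (s+2) k' (by omega) hk'pos
          have hArec : A (s+4) 4 = A (s+3) (A (s+4) 3) :=
            A_rec2 (s+3) (s+4) 3 rfl (by omega) (by omega)
          have hge : k' + 3 ≤ A (s+4) 3 := by rw [hA43]; omega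
          have hmono : A (s+3) (k'+3) ≤ A (s+3) (A (s+4) 3) :=
            A_mono (s+3) (by omega) (by omega) hge
          have hih : (k'+1) * K' (s+2) (k'+1) < A (s+3) (k'+3) := by
            have h := ihprev (k'+1) (by omega)
            have e : k'+1+2 = k'+3 := by ring
            rw [e] at h
            exact h
          have c1 : k' * q1 ≤ k' * q2 := Nat.mul_le_mul_left _ (by omega)
          have harith : 2 * K' (s+3) 2 ≤ (k'+1) * K' (s+2) (k'+1) := by
            rw [hrec]
            calc 2 * (k' * q1 + q2) ≤ (k'+1) * (2 * q2) := by nlinarith [c1]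
            _ ≤ (k'+1) * K' (s+2) (k'+1) := Nat.mul_le_mul_left _ hdouble
          rw [hArec]
          omega
        · -- t = v+3
          show (v+3) * K' (s+3) (v+3) < A (s+4) (v+5)
          have ihu' : (v+2) * K' (s+3) (v+2) < A (s+4) (v+4) := ihu (by omega)
          set k' := K' (s+3) (v+2) with hk'def
          set q1 := K (s+2) k' with hq1def
          set q2 := K' (s+2) k' with hq2def
          have hk11 : 2^(s+3) + 3 ≤ k' := K'_ge_pow (s+3) (v+2) (by omega) (by omega)
          have hk'pos : 1 ≤ k' := by omega
          have hk19 : 11 ≤ k' := by omega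
          have hq1ge : 2 ≤ q1 := K_pos (s+2) k' (by omega) hk'pos
          have hq12 : q1 + 3 ≤ q2 := K_add3 (s+2) k' (by omega) hk'pos
          have hq25 : 5 ≤ q2 := by omega
          have hrec : K' (s+3) (v+3) = k' * q1 + q2 :=
            K'_rec2 (s+2) (s+3) (v+2) rfl (by omega) (by omega)
          have hdouble : 2 * q2 ≤ K' (s+2) (k'+1) := K'_double (s+2) k' (by omega) hk'pos
          have hArec : A (s+4) (v+5) = A (s+3) (A (s+4) (v+4)) :=
            A_rec2 (s+3) (s+4) (v+4) rfl (by omega) (by omega)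
          obtain ⟨m, hm⟩ : ∃ m, (v+2) * k' = m + 2 :=
            ⟨(v+2)*k' - 2, by
              have : k' ≤ (v+2) * k' := Nat.le_mul_of_pos_left _ (by omega)
              omega⟩
          have hge : m + 3 ≤ A (s+4) (v+4) := by omega
          have hmono : A (s+3) (m+3) ≤ A (s+3) (A (s+4) (v+4)) :=
            A_mono (s+3) (by omega) (by omega) hge
          have hih : (m+1) * K' (s+2) (m+1) < A (s+3) (m+3) := by
            have h := ihprev (m+1) (by omega)
            have e : m+1+2 = m+3 := by ring
            rw [e] at h
            exact h
          have hmk : k' + 1 ≤ m + 1 := by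
            have : 2 * k' ≤ (v+2) * k' := Nat.mul_le_mul_right _ (by omega)
            omega
          have hK'm : 2 * q2 ≤ K' (s+2) (m+1) :=
            le_trans hdouble (K'_mono (s+2) (by omega) (by omega) hmk)
          have c1 : k' * q1 ≤ k' * q2 := Nat.mul_le_mul_left _ (by omega)
          have c1v : v * (k' * q1) ≤ v * (k' * q2) := Nat.mul_le_mul_left _ c1
          have c2 : 11 * ((v+1) * q2) ≤ k' * ((v+1) * q2) := Nat.mul_le_mul_right _ hk19
          have c3 : (v+2) * k' * (2*q2) = (m+2) * (2*q2) := by rw [hm]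
          have harith : (v+3) * K' (s+3) (v+3) < (m+1) * (2 * q2) := by
            rw [hrec]
            nlinarith [c1, c1v, c2, c3]
          have h2 : (m+1) * (2*q2) ≤ (m+1) * K' (s+2) (m+1) := Nat.mul_le_mul_left _ hK'm
          rw [hArec]
          omega


/-- Lemma (K-Ackermann): for all positive integers `s` and `t`,
`A(s,t) ≤ t * K(s,t) < t * K'(s,t) < A(s+1, t+2)`. -/
theorem ackermann_le_mul_K_lt (s t : ℕ) (hs : 0 < s) (ht : 0 < t) :
    A s t ≤ t * K s t ∧ t * K s t < t * K' s t ∧ t * K' s t < A (s + 1) (t + 2) := by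
  obtain ⟨s', rfl⟩ : ∃ s', s = s' + 1 := ⟨s - 1, by omega⟩
  refine ⟨main1 (s'+1) t (by omega) ht, ?_, ?_⟩
  · have h := K_add3 (s'+1) t (by omega) ht
    have hlt : K (s'+1) t < K' (s'+1) t := by omega
    exact (Nat.mul_lt_mul_left ht).2 hlt
  · exact main2_core s' t ht
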